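/- arXiv:1106.2743 — 2 statements merged into one kernel-verified Lean document; each statement's English description precedes it below -/
import Mathlib

section
/- Let f : (0,∞) → ℝ be strictly convex and C³. For every n ≥ 1 there exists a bounded, increasing, C² function φₙ on (0,∞) which coincides with f' on [1/n, n] and, for all sufficiently large n, satisfies |φₙ(x)| ≤ 4|f'(x)| + α for some constant α ≥ 0, |φₙ'(x)| ≤ 3 f''(x), and |φₙ(x) − φₙ(y)| ≤ 5|f'(x) − f'(y)| for all x, y > 0. -/
/-!
Take `φₙ = σ ∘ f'` with `σ` a `C²` saturation of `ℝ` that is the identity on `[f'(1/n), f'(n)]`,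
increasing, `1`-Lipschitz and bounded. Then `|φₙ'| ≤ f''`, `|φₙ(x) - φₙ(y)| ≤ |f'(x) - f'(y)|`,
and `|φₙ| ≤ |f'| + 2|f'(1)|` because `σ` fixes `f'(1)`.
The saturation is `σ(t) = t - r(t - b) + r(a - t)` for the ramp `r(u) = u - arctan u` on `u > 0`,
`r = 0` on `u ≤ 0`: `r`, `r' = u²/(1 + u²)` and `r''` all tend to `0` at `0⁺`, so `r` is `C²`;
`0 ≤ r' ≤ 1`; and `r(u) ≥ u - π/2` keeps `σ` bounded.
-/

open Set Real

lemma MonotoneOn.deriv_nonneg_of_isOpen {g : ℝ → ℝ} {s : Set ℝ} {x : ℝ} (hg : MonotoneOn g s)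
    (hs : IsOpen s) (hx : x ∈ s) : 0 ≤ deriv g x := by
  rw [← derivWithin_of_isOpen hs hx]
  exact hg.derivWithin_nonneg

lemma hasDerivAt_indicator_Ioi_zero {G G' : ℝ → ℝ} (hG : ∀ u, HasDerivAt G (G' u) u)
    (hG0 : G 0 = 0) (hG'0 : G' 0 = 0) (u : ℝ) :
    HasDerivAt ((Ioi 0).indicator G) ((Ioi 0).indicator G' u) u := by
  rcases lt_trichotomy u 0 with hu | rfl | hu
  · rw [indicator_of_notMem (notMem_Ioi.2 hu.le)]
    refine (hasDerivAt_const u 0).congr_of_eventuallyEq ?_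
    filter_upwards [Iio_mem_nhds hu] with v hv
    exact indicator_of_notMem (notMem_Ioi.2 (le_of_lt hv)) G
  · rw [indicator_of_notMem (self_notMem_Ioi (a := (0:ℝ))), ← hasDerivWithinAt_univ,
      ← Iic_union_Ici (a := (0:ℝ))]
    refine HasDerivWithinAt.union ?_ ?_
    · refine (hasDerivWithinAt_const 0 _ 0).congr (fun v hv => ?_) ?_ <;>
        simp_all [indicator_of_notMem]
    · have hG0' : HasDerivAt G 0 0 := by simpa [hG'0] using hG 0
      refine hG0'.hasDerivWithinAt.congr (fun v hv => ?_) (by simp [hG0])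
      rcases (mem_Ici.1 hv).eq_or_lt with rfl | hv
      · simp [hG0]
      · exact indicator_of_mem hv G
  · rw [indicator_of_mem (mem_Ioi.2 hu)]
    refine (hG u).congr_of_eventuallyEq ?_
    filter_upwards [Ioi_mem_nhds hu] with v hv
    exact indicator_of_mem hv G

lemma continuous_indicator_Ioi_zero {G : ℝ → ℝ} (hG : Continuous G) (hG0 : G 0 = 0) :
    Continuous ((Ioi 0).indicator G) := by
  rw [← piecewise_eq_indicator]
  exact hG.piecewise (by simp [hG0]) continuous_const

noncomputable def ramp : ℝ → ℝ := (Ioi 0).indicator fun u => u - arctan u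

noncomputable def rampDeriv : ℝ → ℝ := (Ioi 0).indicator fun u => u ^ 2 / (1 + u ^ 2)

lemma hasDerivAt_ramp (u : ℝ) : HasDerivAt ramp (rampDeriv u) u := by
  refine hasDerivAt_indicator_Ioi_zero (fun v => ?_) (by simp) (by simp) u
  refine ((hasDerivAt_id' v).sub (hasDerivAt_arctan v)).congr_deriv ?_
  field_simp
  ring

lemma hasDerivAt_rampDeriv (u : ℝ) :
    HasDerivAt rampDeriv ((Ioi 0).indicator (fun v => 2 * v / (1 + v ^ 2) ^ 2) u) u := by
  refine hasDerivAt_indicator_Ioi_zero (fun v => ?_) (by simp) (by simp) u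
  have hpos : (1 : ℝ) + v ^ 2 ≠ 0 := by positivity
  refine ((hasDerivAt_pow 2 v).div ((hasDerivAt_pow 2 v).const_add 1) hpos).congr_deriv ?_
  field_simp
  ring

lemma contDiff_ramp : ContDiff ℝ 2 ramp := by
  have hderiv : deriv ramp = rampDeriv := funext fun u => (hasDerivAt_ramp u).deriv
  rw [show (2 : WithTop ℕ∞) = 1 + 1 from rfl, contDiff_succ_iff_deriv, hderiv,
    contDiff_one_iff_deriv, funext fun u => (hasDerivAt_rampDeriv u).deriv]
  refine ⟨fun u => (hasDerivAt_ramp u).differentiableAt, by simp,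
    fun u => (hasDerivAt_rampDeriv u).differentiableAt,
    continuous_indicator_Ioi_zero ?_ (by simp)⟩
  exact (continuous_const.mul continuous_id).div (by fun_prop) fun v => by positivity

lemma rampDeriv_nonneg (u : ℝ) : 0 ≤ rampDeriv u :=
  Set.indicator_nonneg (fun v _ => by positivity) u

lemma rampDeriv_le_one (u : ℝ) : rampDeriv u ≤ 1 := by
  refine indicator_apply_le' (fun _ => ?_) fun _ => zero_le_one
  rw [div_le_one (by positivity)]
  linarith

lemma ramp_of_nonpos {u : ℝ} (hu : u ≤ 0) : ramp u = 0 :=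
  indicator_of_notMem (notMem_Ioi.2 hu) _

lemma rampDeriv_of_nonpos {u : ℝ} (hu : u ≤ 0) : rampDeriv u = 0 :=
  indicator_of_notMem (notMem_Ioi.2 hu) _

lemma sub_pi_div_two_le_ramp (u : ℝ) : u - π / 2 ≤ ramp u := by
  rcases le_or_gt u 0 with hu | hu
  · rw [ramp_of_nonpos hu]
    linarith [pi_pos]
  · rw [ramp, indicator_of_mem (mem_Ioi.2 hu)]
    linarith [arctan_lt_pi_div_two u]

noncomputable def saturate (a b t : ℝ) : ℝ := t - ramp (t - b) + ramp (a - t)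

section saturate

variable {a b : ℝ}

lemma saturate_of_mem_Icc {t : ℝ} (ht : t ∈ Icc a b) : saturate a b t = t := by
  rw [saturate, ramp_of_nonpos (by linarith [ht.2]), ramp_of_nonpos (by linarith [ht.1])]
  ring

lemma hasDerivAt_saturate (a b t : ℝ) :
    HasDerivAt (saturate a b) (1 - rampDeriv (t - b) - rampDeriv (a - t)) t := by
  have hup := (hasDerivAt_ramp (t - b)).comp_sub_const t b
  have hdown := (hasDerivAt_ramp (a - t)).comp_const_sub a t
  exact ((hasDerivAt_id' t).sub hup).add hdown |>.congr_deriv (by ring)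

lemma contDiff_saturate (a b : ℝ) : ContDiff ℝ 2 (saturate a b) :=
  (contDiff_id.sub (contDiff_ramp.comp (contDiff_id.sub contDiff_const))).add
    (contDiff_ramp.comp (contDiff_const.sub contDiff_id))

lemma deriv_saturate_mem_Icc (hab : a ≤ b) (t : ℝ) : deriv (saturate a b) t ∈ Icc 0 1 := by
  rw [(hasDerivAt_saturate a b t).deriv]
  have := rampDeriv_nonneg (t - b)
  have := rampDeriv_nonneg (a - t)
  -- at most one of the two ramps is active at `t`
  rcases le_total t b with htb | hbt
  · rw [rampDeriv_of_nonpos (sub_nonpos.2 htb)]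
    constructor <;> linarith [rampDeriv_le_one (a - t)]
  · rw [rampDeriv_of_nonpos (by linarith : a - t ≤ 0)]
    constructor <;> linarith [rampDeriv_le_one (t - b)]

lemma monotone_saturate (hab : a ≤ b) : Monotone (saturate a b) :=
  monotone_of_deriv_nonneg (fun t => (hasDerivAt_saturate a b t).differentiableAt)
    fun t => (deriv_saturate_mem_Icc hab t).1

lemma lipschitzWith_saturate (hab : a ≤ b) : LipschitzWith 1 (saturate a b) := by
  refine lipschitzWith_of_nnnorm_deriv_le (fun t => (hasDerivAt_saturate a b t).differentiableAt)
    fun t => ?_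
  obtain ⟨h0, h1⟩ := deriv_saturate_mem_Icc hab t
  rw [← NNReal.coe_le_coe, coe_nnnorm, Real.norm_eq_abs, abs_of_nonneg h0]
  exact h1

lemma abs_saturate_sub_le (hab : a ≤ b) (s t : ℝ) :
    |saturate a b s - saturate a b t| ≤ |s - t| := by
  simpa [Real.dist_eq] using (lipschitzWith_saturate hab).dist_le_mul s t

lemma saturate_mem_Icc (hab : a ≤ b) (t : ℝ) :
    saturate a b t ∈ Icc (a - π / 2) (b + π / 2) := by
  have hπ := pi_pos
  constructor
  · rcases le_total a t with hat | hta
    · linarith [monotone_saturate hab hat, saturate_of_mem_Icc (left_mem_Icc.2 hab)]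
    · rw [saturate, ramp_of_nonpos (by linarith : t - b ≤ 0)]
      linarith [sub_pi_div_two_le_ramp (a - t)]
  · rcases le_total t b with htb | hbt
    · linarith [monotone_saturate hab htb, saturate_of_mem_Icc (right_mem_Icc.2 hab)]
    · rw [saturate, ramp_of_nonpos (by linarith : a - t ≤ 0)]
      linarith [sub_pi_div_two_le_ramp (t - b)]

lemma abs_saturate_le (hab : a ≤ b) {c : ℝ} (hc : c ∈ Icc a b) (t : ℝ) :
    |saturate a b t| ≤ |t| + 2 * |c| := by
  have hlip := abs_saturate_sub_le hab t c
  rw [saturate_of_mem_Icc hc] at hlip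
  linarith [abs_sub_abs_le_abs_sub (saturate a b t) c, abs_sub t c]

lemma abs_deriv_saturate_comp_le (hab : a ≤ b) {g : ℝ → ℝ} {x : ℝ}
    (hg : DifferentiableAt ℝ g x) :
    |deriv (fun y => saturate a b (g y)) x| ≤ |deriv g x| := by
  have hcomp : HasDerivAt (fun y => saturate a b (g y))
      (deriv (saturate a b) (g x) * deriv g x) x :=
    (hasDerivAt_saturate a b (g x)).differentiableAt.hasDerivAt.comp x hg.hasDerivAt
  rw [hcomp.deriv, abs_mul]
  obtain ⟨h0, h1⟩ := deriv_saturate_mem_Icc hab (g x)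
  exact mul_le_of_le_one_left (abs_nonneg _) (by rwa [abs_of_nonneg h0])

end saturate

theorem stmt1 (f : ℝ → ℝ) (hconv : StrictConvexOn ℝ (Set.Ioi 0) f)
    (hC3 : ContDiffOn ℝ 3 f (Set.Ioi 0)) :
    ∃ φ : ℕ → ℝ → ℝ,
      (∀ n : ℕ, 1 ≤ n →
        (∃ M : ℝ, ∀ x ∈ Set.Ioi (0:ℝ), |φ n x| ≤ M) ∧
        MonotoneOn (φ n) (Set.Ioi 0) ∧
        ContDiffOn ℝ 2 (φ n) (Set.Ioi 0) ∧
        (∀ x ∈ Set.Icc ((n:ℝ)⁻¹) (n:ℝ), φ n x = deriv f x)) ∧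
      ∃ α : ℝ, 0 ≤ α ∧ ∃ N : ℕ, ∀ n : ℕ, N ≤ n →
        ∀ x ∈ Set.Ioi (0:ℝ), ∀ y ∈ Set.Ioi (0:ℝ),
          |φ n x| ≤ 4 * |deriv f x| + α ∧
          |deriv (φ n) x| ≤ 3 * iteratedDeriv 2 f x ∧
          |φ n x - φ n y| ≤ 5 * |deriv f x - deriv f y| := by
  set g := deriv f
  have hg_mono : MonotoneOn g (Ioi 0) := hconv.convexOn.monotoneOn_deriv fun x hx =>
    (hC3.contDiffAt (Ioi_mem_nhds hx)).differentiableAt (by norm_num)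
  have hg_C2 : ContDiffOn ℝ 2 g (Ioi 0) := hC3.deriv_of_isOpen isOpen_Ioi (by norm_num)
  have hg_diff : ∀ x ∈ Ioi (0:ℝ), DifferentiableAt ℝ g x := fun x hx =>
    (hg_C2.contDiffAt (Ioi_mem_nhds hx)).differentiableAt (by norm_num)
  have hf'' : ∀ x ∈ Ioi (0:ℝ), iteratedDeriv 2 f x = |deriv g x| := fun x hx => by
    rw [iteratedDeriv_succ, iteratedDeriv_one,
      abs_of_nonneg (hg_mono.deriv_nonneg_of_isOpen isOpen_Ioi hx)]
  have hends : ∀ n : ℕ, 1 ≤ n → (n:ℝ)⁻¹ ∈ Ioi 0 ∧ g (n:ℝ)⁻¹ ≤ g 1 ∧ g 1 ≤ g n := by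
    intro n hn
    have hn : (1:ℝ) ≤ n := by exact_mod_cast hn
    have hn_inv : (0:ℝ) < (n:ℝ)⁻¹ := by positivity
    have h1 : (1:ℝ) ∈ Ioi 0 := mem_Ioi.2 one_pos
    exact ⟨hn_inv, hg_mono hn_inv h1 (inv_le_one_of_one_le₀ hn),
      hg_mono h1 (one_pos.trans_le hn) hn⟩
  refine ⟨fun n x => saturate (g (n:ℝ)⁻¹) (g n) (g x), fun n hn => ?_,
    2 * |g 1|, by positivity, 1, fun n hn x hx y hy => ?_⟩
  all_goals obtain ⟨hn_inv, hlow, hhigh⟩ := hends n hn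
  all_goals have hab := hlow.trans hhigh
  · refine ⟨⟨_, fun x _ => abs_le_max_abs_abs (saturate_mem_Icc hab (g x)).1
      (saturate_mem_Icc hab (g x)).2⟩, (monotone_saturate hab).comp_monotoneOn hg_mono,
      (contDiff_saturate _ _).comp_contDiffOn hg_C2, fun x hx => saturate_of_mem_Icc ?_⟩
    have hx0 : x ∈ Ioi 0 := lt_of_lt_of_le hn_inv hx.1
    exact ⟨hg_mono hn_inv hx0 hx.1, hg_mono hx0 (lt_of_lt_of_le hx0 hx.2) hx.2⟩
  · refine ⟨?_, ?_, ?_⟩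
    · linarith [abs_saturate_le hab ⟨hlow, hhigh⟩ (g x), abs_nonneg (g x)]
    · rw [hf'' x hx]
      linarith [abs_deriv_saturate_comp_le hab (hg_diff x hx), abs_nonneg (deriv g x)]
    · linarith [abs_saturate_sub_le hab (g x) (g y), abs_nonneg (g x - g y)]
end

section
/- Let g(x) = a₀·x^λ + x^λ·∑_{i=1}^n bᵢ·(ln x)^i on (0,∞) with λ ∈ ℝ satisfying b^λ = 1 + a·λ for given b > 0, b ≠ 1, a ≠ 0. Then g satisfies g(bx) − g(x) = a·x·g'(x) for all x > 0 if and only if the coefficients satisfy, for each 1 ≤ i ≤ n: ∑_{k=i}^n b^λ·b_k·C(k,i)·(ln b)^{k−i} − bᵢ·(1 + aλ) − a·b_{i+1}·(i+1) = 0 (with b_{n+1} = 0), together with a₀(b^λ − aλ − 1) + b^λ·∑_{i=1}^n bᵢ(ln b)^i − a·b₁ = 0. -/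
/-!
Write `g x = x ^ λ * P (log x)` with `P = a₀ + ∑ bᵢ Tⁱ`. Then
`g (b x) - g x - a x g'(x) = x ^ λ * Q (log x)` with
`Q = b ^ λ P(T + log b) - (1 + aλ) P - a P'`.
As `log` maps `(0, ∞)` onto `ℝ`, the functional equation holds iff `Q = 0`, i.e. iff the
coefficients of `Q` of degree `≤ n` vanish; the binomial expansion of `P(T + log b)` gives them.
-/

open Finset Polynomial

noncomputable def scalingDefect (a b lam : ℝ) (p : ℝ[X]) : ℝ[X] :=
  C (b ^ lam) * p.comp (X + C (Real.log b)) - C (1 + a * lam) * p - C a * derivative p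

section RpowMulEvalLog

variable {lam : ℝ} {p : ℝ[X]} {g : ℝ → ℝ}

theorem hasDerivAt_rpow_mul_eval_log {x : ℝ} (hx : x ≠ 0) :
    HasDerivAt (fun y => y ^ lam * p.eval (Real.log y))
      (lam * x ^ (lam - 1) * p.eval (Real.log x)
        + x ^ lam * ((derivative p).eval (Real.log x) * x⁻¹)) x :=
  (Real.hasDerivAt_rpow_const (Or.inl hx)).mul
    ((p.hasDerivAt (Real.log x)).comp x (Real.hasDerivAt_log hx))

theorem mul_deriv_eq_of_eq_rpow_mul_eval_log
    (hg : ∀ x, 0 < x → g x = x ^ lam * p.eval (Real.log x)) {x : ℝ} (hx : 0 < x) :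
    x * deriv g x = x ^ lam * (lam * p.eval (Real.log x) + (derivative p).eval (Real.log x)) := by
  have hg_nhds : g =ᶠ[nhds x] fun y => y ^ lam * p.eval (Real.log y) :=
    Filter.eventually_of_mem (Ioi_mem_nhds hx) hg
  rw [hg_nhds.deriv_eq, (hasDerivAt_rpow_mul_eval_log hx.ne').deriv]
  have hx_rpow : x * x ^ (lam - 1) = x ^ lam := by
    rw [mul_comm, ← Real.rpow_add_one hx.ne', sub_add_cancel]
  field_simp
  linear_combination lam * p.eval (Real.log x) * hx_rpow

theorem sub_sub_mul_deriv_eq_scalingDefect (a : ℝ) {b : ℝ} (hb : 0 < b)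
    (hg : ∀ x, 0 < x → g x = x ^ lam * p.eval (Real.log x)) {x : ℝ} (hx : 0 < x) :
    g (b * x) - g x - a * x * deriv g x
      = x ^ lam * (scalingDefect a b lam p).eval (Real.log x) := by
  rw [mul_assoc, mul_deriv_eq_of_eq_rpow_mul_eval_log hg hx, hg x hx, hg (b * x) (by positivity),
    Real.log_mul hb.ne' hx.ne', Real.mul_rpow hb.le hx.le]
  simp only [scalingDefect, eval_sub, eval_mul, eval_C, eval_comp, eval_add, eval_X]
  rw [add_comm (Real.log x)]
  ring

theorem scaling_eq_iff_scalingDefect_eq_zero (a : ℝ) {b : ℝ} (hb : 0 < b)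
    (hg : ∀ x, 0 < x → g x = x ^ lam * p.eval (Real.log x)) :
    (∀ x, 0 < x → g (b * x) - g x = a * x * deriv g x) ↔ scalingDefect a b lam p = 0 := by
  have hfe_iff : ∀ x, 0 < x → (g (b * x) - g x = a * x * deriv g x ↔
      (scalingDefect a b lam p).eval (Real.log x) = 0) := fun x hx => by
    rw [← sub_eq_zero, sub_sub_mul_deriv_eq_scalingDefect a hb hg hx]
    simp [(Real.rpow_pos_of_pos hx lam).ne']
  constructor
  · intro h
    refine Polynomial.funext fun t => ?_
    simpa using (hfe_iff _ (Real.exp_pos t)).mp (h _ (Real.exp_pos t))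
  · intro h x hx
    rw [hfe_iff x hx, h, eval_zero]

end RpowMulEvalLog

theorem coeff_scalingDefect (a b lam : ℝ) (p : ℝ[X]) (i : ℕ) :
    (scalingDefect a b lam p).coeff i
      = b ^ lam * (p.comp (X + C (Real.log b))).coeff i - (1 + a * lam) * p.coeff i
        - a * (p.coeff (i + 1) * (i + 1)) := by
  simp only [scalingDefect, coeff_sub, coeff_C_mul, coeff_derivative]

theorem natDegree_scalingDefect_le (a b lam : ℝ) {p : ℝ[X]} {n : ℕ} (hp : p.natDegree ≤ n) :
    (scalingDefect a b lam p).natDegree ≤ n := by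
  have hcomp : (p.comp (X + C (Real.log b))).natDegree ≤ n := by
    simpa [natDegree_X_add_C] using natDegree_comp_le.trans (by simpa using hp)
  unfold scalingDefect
  refine (natDegree_sub_le _ _).trans (max_le ((natDegree_sub_le _ _).trans (max_le ?_ ?_)) ?_)
  · exact (natDegree_C_mul_le _ _).trans hcomp
  · exact (natDegree_C_mul_le _ _).trans hp
  · exact (natDegree_C_mul_le _ _).trans
      ((natDegree_derivative_le p).trans ((Nat.sub_le _ _).trans hp))

section LogPoly

variable {R : Type*} [CommSemiring R] (a₀ : R) (bc : ℕ → R) (n : ℕ)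

noncomputable def logPoly : R[X] :=
  C a₀ + ∑ i ∈ Icc 1 n, C (bc i) * X ^ i

theorem eval_logPoly (t : R) :
    (logPoly a₀ bc n).eval t = a₀ + ∑ i ∈ Icc 1 n, bc i * t ^ i := by
  simp [logPoly, eval_finsetSum]

theorem coeff_logPoly_zero : (logPoly a₀ bc n).coeff 0 = a₀ := by
  simp [logPoly, finsetSum_coeff, coeff_X_pow]

theorem coeff_logPoly_of_pos {i : ℕ} (hi : 0 < i) :
    (logPoly a₀ bc n).coeff i = if i ≤ n then bc i else 0 := by
  simp [logPoly, finsetSum_coeff, coeff_X_pow, coeff_C_of_ne_zero hi.ne',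
    Nat.one_le_iff_ne_zero.2 hi.ne']

theorem coeff_logPoly_succ {bc : ℕ → R} {n i : ℕ} (hbn : bc (n + 1) = 0) (hi : i ≤ n) :
    (logPoly a₀ bc n).coeff (i + 1) = bc (i + 1) := by
  rw [coeff_logPoly_of_pos a₀ bc n i.succ_pos]
  split_ifs with h
  · rfl
  · rw [show i = n by omega, hbn]

theorem natDegree_logPoly_le : (logPoly a₀ bc n).natDegree ≤ n :=
  natDegree_le_iff_coeff_eq_zero.2 fun i hi => by
    rw [coeff_logPoly_of_pos a₀ bc n (by omega), if_neg (by omega)]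

theorem coeff_logPoly_comp_X_add_C (c : R) {i : ℕ} (hi : 0 < i) :
    ((logPoly a₀ bc n).comp (X + C c)).coeff i
      = ∑ k ∈ Icc i n, bc k * k.choose i * c ^ (k - i) := by
  simp only [logPoly, add_comp, C_comp, Polynomial.sum_comp, mul_comp, X_pow_comp, coeff_add,
    coeff_C_of_ne_zero hi.ne', zero_add, finsetSum_coeff, coeff_C_mul, coeff_X_add_C_pow]
  calc _ = ∑ k ∈ Icc i n, bc k * (c ^ (k - i) * k.choose i) := by
        refine (Finset.sum_subset (Icc_subset_Icc_left (Nat.succ_le_of_lt hi))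
          fun k hk hki => ?_).symm
        simp only [mem_Icc] at hk hki
        rw [Nat.choose_eq_zero_of_lt (by omega), Nat.cast_zero, mul_zero, mul_zero]
    _ = _ := sum_congr rfl fun k _ => by ring

end LogPoly

section ScalingDefectLogPoly

variable (a b lam a₀ : ℝ) {bc : ℕ → ℝ} {n : ℕ}

theorem coeff_zero_scalingDefect_logPoly (hbn : bc (n + 1) = 0) :
    (scalingDefect a b lam (logPoly a₀ bc n)).coeff 0
      = a₀ * (b ^ lam - a * lam - 1)
        + b ^ lam * ∑ i ∈ Icc 1 n, bc i * Real.log b ^ i - a * bc 1 := by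
  rw [coeff_scalingDefect, coeff_zero_eq_eval_zero, eval_comp, coeff_logPoly_zero,
    coeff_logPoly_succ a₀ hbn n.zero_le]
  simp only [eval_add, eval_X, eval_C, zero_add, eval_logPoly]
  push_cast
  ring

theorem coeff_scalingDefect_logPoly (hbn : bc (n + 1) = 0) {i : ℕ} (hi : i ∈ Icc 1 n) :
    (scalingDefect a b lam (logPoly a₀ bc n)).coeff i
      = (∑ k ∈ Icc i n, b ^ lam * bc k * (k.choose i : ℝ) * Real.log b ^ (k - i))
        - bc i * (1 + a * lam) - a * bc (i + 1) * (i + 1) := by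
  obtain ⟨hi1, hin⟩ := mem_Icc.1 hi
  rw [coeff_scalingDefect, coeff_logPoly_comp_X_add_C _ _ _ _ hi1, coeff_logPoly_of_pos _ _ _ hi1,
    if_pos hin, coeff_logPoly_succ a₀ hbn hin, mul_sum]
  simp only [mul_assoc]
  ring

end ScalingDefectLogPoly

theorem stmt10_general (a b lam : ℝ) (hb : 0 < b)
    (n : ℕ) (a₀ : ℝ) (bc : ℕ → ℝ) (hbn : bc (n + 1) = 0)
    (g : ℝ → ℝ)
    (hg : ∀ x : ℝ, 0 < x →
      g x = a₀ * x ^ lam + x ^ lam * ∑ i ∈ Finset.Icc 1 n, bc i * (Real.log x) ^ i) :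
    (∀ x : ℝ, 0 < x → g (b * x) - g x = a * x * deriv g x) ↔
      (a₀ * (b ^ lam - a * lam - 1)
          + b ^ lam * ∑ i ∈ Finset.Icc 1 n, bc i * (Real.log b) ^ i - a * bc 1 = 0 ∧
        ∀ i ∈ Finset.Icc 1 n,
          (∑ k ∈ Finset.Icc i n,
              b ^ lam * bc k * (k.choose i : ℝ) * (Real.log b) ^ (k - i))
            - bc i * (1 + a * lam) - a * bc (i + 1) * (i + 1) = 0) := by
  have hg_log : ∀ x, 0 < x → g x = x ^ lam * (logPoly a₀ bc n).eval (Real.log x) := by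
    intro x hx
    rw [hg x hx, eval_logPoly]
    ring
  rw [scaling_eq_iff_scalingDefect_eq_zero a hb hg_log,
    ext_iff_natDegree_le (natDegree_scalingDefect_le a b lam (natDegree_logPoly_le a₀ bc n))
      (natDegree_zero.trans_le n.zero_le)]
  simp only [coeff_zero]
  constructor
  · intro h
    exact ⟨coeff_zero_scalingDefect_logPoly a b lam a₀ hbn ▸ h 0 n.zero_le,
      fun i hi => coeff_scalingDefect_logPoly a b lam a₀ hbn hi ▸ h i (mem_Icc.1 hi).2⟩
  · rintro ⟨h_zero, h_pos⟩ i hin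
    rcases i.eq_zero_or_pos with rfl | hi
    · rwa [coeff_zero_scalingDefect_logPoly a b lam a₀ hbn]
    · rw [coeff_scalingDefect_logPoly a b lam a₀ hbn (mem_Icc.2 ⟨hi, hin⟩)]
      exact h_pos i (mem_Icc.2 ⟨hi, hin⟩)

theorem stmt10 (a b lam : ℝ) (hb : 0 < b) (hb1 : b ≠ 1) (ha : a ≠ 0)
    (hlam : b ^ lam = 1 + a * lam)
    (n : ℕ) (a₀ : ℝ) (bc : ℕ → ℝ) (hbn : bc (n + 1) = 0)
    (g : ℝ → ℝ)
    (hg : ∀ x : ℝ, 0 < x →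
      g x = a₀ * x ^ lam + x ^ lam * ∑ i ∈ Finset.Icc 1 n, bc i * (Real.log x) ^ i) :
    (∀ x : ℝ, 0 < x → g (b * x) - g x = a * x * deriv g x) ↔
      (a₀ * (b ^ lam - a * lam - 1)
          + b ^ lam * ∑ i ∈ Finset.Icc 1 n, bc i * (Real.log b) ^ i - a * bc 1 = 0 ∧
        ∀ i ∈ Finset.Icc 1 n,
          (∑ k ∈ Finset.Icc i n,
              b ^ lam * bc k * (k.choose i : ℝ) * (Real.log b) ^ (k - i))
            - bc i * (1 + a * lam) - a * bc (i + 1) * (i + 1) = 0) :=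
  stmt10_general a b lam hb n a₀ bc hbn g hg
end
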